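/- Let X be a real Banach space and A : X → X a bounded linear operator. Suppose f : ℝ × X × X → X satisfies ‖f(t₁,v₁,w₁) − f(t₂,v₂,w₂)‖ ≤ L_f·(|t₁ − t₂| + ‖v₁ − v₂‖ + ‖w₁ − w₂‖) for all arguments; τ : ℝ × X → ℝ is nonnegative and satisfies |τ(t₁,v₁) − τ(t₂,v₂)| ≤ L_τ·(|t₁ − t₂| + ‖v₁ − v₂‖) for all arguments; and φ : (−∞, 0] → X is Lipschitz continuous. Then there exist T > 0 and a function u : (−∞, T] → X such that: u(t) = φ(t) for all t ≤ 0; u is continuous on (−∞, T]; u is continuously differentiable on [0, T]; and u′(t) + A u(t) = f(t, u(t), u(t − τ(t, u(t)))) for all t ∈ [0, T]. Moreover, u is the unique function with these properties on (−∞, T]. -/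

import Mathlib

open Set Filter Topology MeasureTheory
open scoped NNReal

/-!
Look for the solution among functions that equal `φ` on `(-∞, 0]` and are `M`-Lipschitz. For
such `u` the right-hand side `g u s = f(s, u s, u(s - τ(s, u s))) - A (u s)` is bounded near
`s = 0` by a constant `B` independent of `M`, and it is Lipschitz in `u` for the sup norm on
`[0, T]`: the two delayed arguments `s - τ(s, u s)` and `s - τ(s, v s)` differ by at most
`Lτ ‖u s - v s‖`, which the Lipschitz bound of `u` turns into a difference of values.
With `M = Lip φ + B` and `T` small, the Picard map `u ↦ φ 0 + ∫₀ᵗ g u` preserves these functions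
and contracts them, so Banach's fixed point theorem gives a solution. The same estimate, which
needs only one of the two functions to be Lipschitz, gives `max ‖u - v‖ ≤ C T max ‖u - v‖` on
`[0, T]` for any other solution `v`, hence uniqueness.
-/

theorem continuous_of_norm_sub_le {α E : Type*} [TopologicalSpace α] [SeminormedAddCommGroup E]
    {F : α → E} {ρ : α → α → ℝ} (hρ : ∀ q, Continuous (ρ · q)) (hρ_self : ∀ q, ρ q q = 0)
    (h : ∀ p q, ‖F p - F q‖ ≤ ρ p q) : Continuous F := by
  refine continuous_iff_continuousAt.2 fun q => tendsto_iff_norm_sub_tendsto_zero.2 ?_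
  exact squeeze_zero (fun _ => norm_nonneg _) (fun p => h p q) (hρ_self q ▸ (hρ q).tendsto q)

theorem norm_integral_sub_integral_le {E : Type*} [NormedAddCommGroup E] [NormedSpace ℝ E]
    {g₁ g₂ : ℝ → E} {a b C : ℝ} (hab : a ≤ b) (h₁ : ContinuousOn g₁ (Icc a b))
    (h₂ : ContinuousOn g₂ (Icc a b)) (h : ∀ s ∈ Icc a b, ‖g₁ s - g₂ s‖ ≤ C) :
    ‖(∫ s in a..b, g₁ s) - ∫ s in a..b, g₂ s‖ ≤ C * (b - a) := by
  rw [← intervalIntegral.integral_sub (h₁.intervalIntegrable_of_Icc hab)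
    (h₂.intervalIntegrable_of_Icc hab), ← abs_of_nonneg (sub_nonneg.2 hab)]
  refine intervalIntegral.norm_integral_le_of_norm_le_const fun s hs => h s ?_
  rw [uIoc_of_le hab] at hs
  exact Ioc_subset_Icc_self hs

theorem lipschitzWith_integral_of_norm_le {E : Type*} [NormedAddCommGroup E] [NormedSpace ℝ E]
    {g : ℝ → E} {a b : ℝ} {B : ℝ≥0} (hg : Continuous g) (h : ∀ s ∈ Icc a b, ‖g s‖ ≤ B) :
    LipschitzWith B fun t : Icc a b => ∫ s in a..t, g s := by
  refine LipschitzWith.of_dist_le_mul fun t₁ t₂ => ?_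
  rw [dist_eq_norm, intervalIntegral.integral_interval_sub_left (hg.intervalIntegrable _ _)
    (hg.intervalIntegrable _ _), Subtype.dist_eq, Real.dist_eq]
  exact intervalIntegral.norm_integral_le_of_norm_le_const fun s hs =>
    h s (uIcc_subset_Icc t₂.2 t₁.2 (uIoc_subset_uIcc hs))

section

variable {X : Type*} [NormedAddCommGroup X]

theorem continuous_uncurry₃_of_norm_sub_le {f : ℝ → X → X → X} {Lf : ℝ}
    (hf : ∀ (t₁ t₂ : ℝ) (v₁ v₂ w₁ w₂ : X),
      ‖f t₁ v₁ w₁ - f t₂ v₂ w₂‖ ≤ Lf * (|t₁ - t₂| + ‖v₁ - v₂‖ + ‖w₁ - w₂‖)) :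
    Continuous fun p : ℝ × X × X => f p.1 p.2.1 p.2.2 :=
  continuous_of_norm_sub_le
    (ρ := fun p q => Lf * (|p.1 - q.1| + ‖p.2.1 - q.2.1‖ + ‖p.2.2 - q.2.2‖))
    (fun _ => by fun_prop) (fun _ => by simp) fun _ _ => hf _ _ _ _ _ _

theorem continuous_uncurry_of_abs_sub_le {τ : ℝ → X → ℝ} {Lτ : ℝ}
    (hτ : ∀ (t₁ t₂ : ℝ) (v₁ v₂ : X), |τ t₁ v₁ - τ t₂ v₂| ≤ Lτ * (|t₁ - t₂| + ‖v₁ - v₂‖)) :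
    Continuous fun p : ℝ × X => τ p.1 p.2 :=
  continuous_of_norm_sub_le (ρ := fun p q => Lτ * (|p.1 - q.1| + ‖p.2 - q.2‖))
    (fun _ => by fun_prop) (fun _ => by simp) fun _ _ => hτ _ _ _ _

section extendHistory

variable {T : ℝ} (hT : 0 ≤ T) {φ : ℝ → X}

/-- A candidate solution, encoded by its increment `w = u - φ 0` on `[0, T]`. -/
noncomputable def extendHistory (φ : ℝ → X) (w : C(Icc 0 T, X)) (t : ℝ) : X :=
  φ (min t 0) + IccExtend hT w t

theorem extendHistory_of_nonpos {w : C(Icc 0 T, X)} (hw : w ⟨0, left_mem_Icc.2 hT⟩ = 0)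
    {t : ℝ} (ht : t ≤ 0) : extendHistory hT φ w t = φ t := by
  rw [extendHistory, min_eq_left ht, IccExtend_of_le_left _ _ ht, hw, add_zero]

theorem extendHistory_of_mem_Icc (w : C(Icc 0 T, X)) {t : ℝ} (ht : t ∈ Icc 0 T) :
    extendHistory hT φ w t = φ 0 + w ⟨t, ht⟩ := by
  rw [extendHistory, min_eq_right ht.1, IccExtend_of_mem _ _ ht]

theorem norm_extendHistory_sub_le (w₁ w₂ : C(Icc 0 T, X)) (t : ℝ) :
    ‖extendHistory hT φ w₁ t - extendHistory hT φ w₂ t‖ ≤ dist w₁ w₂ := by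
  rw [extendHistory, extendHistory, add_sub_add_left_eq_sub, ← dist_eq_norm]
  exact ContinuousMap.dist_apply_le_dist _

theorem norm_extendHistory_sub_le_mul {w : C(Icc 0 T, X)} (hw₀ : w ⟨0, left_mem_Icc.2 hT⟩ = 0)
    {B : ℝ≥0} (hw : LipschitzWith B w) {r : ℝ} (hr : r ∈ Icc 0 T) :
    ‖extendHistory hT φ w r - φ 0‖ ≤ B * T := by
  rw [extendHistory_of_mem_Icc hT w hr, add_sub_cancel_left, ← sub_zero (w _), ← hw₀,
    ← dist_eq_norm]
  calc dist (w ⟨r, hr⟩) (w ⟨0, _⟩) ≤ B * dist r 0 := hw.dist_le_mul _ _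
    _ ≤ B * T := by rw [Real.dist_eq, sub_zero, abs_of_nonneg hr.1]; gcongr; exact hr.2

theorem continuous_extendHistory (hφ : ContinuousOn φ (Iic 0)) (w : C(Icc 0 T, X)) :
    Continuous (extendHistory hT φ w) :=
  (hφ.comp_continuous (continuous_id.min continuous_const) fun t => min_le_right t 0).add
    w.continuous.Icc_extend'

theorem lipschitzWith_extendHistory {K M : ℝ≥0} (hφ : LipschitzOnWith K φ (Iic 0))
    {w : C(Icc 0 T, X)} (hw : LipschitzWith M w) :
    LipschitzWith (K + M) (extendHistory hT φ w) := by
  have h_min : LipschitzWith K fun t => φ (min t 0) := by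
    simpa [Function.comp_def] using (hφ.comp (LipschitzWith.id.min_const 0).lipschitzOnWith
      (mapsTo_univ_iff.2 fun t => min_le_right t 0) : LipschitzOnWith (K * 1) _ univ)
  have h_proj : LipschitzWith M (IccExtend hT w) := by
    simpa [IccExtend] using hw.comp (LipschitzWith.projIcc hT)
  exact h_min.add h_proj

end extendHistory

variable [NormedSpace ℝ X]

def delayRHS (A : X →L[ℝ] X) (f : ℝ → X → X → X) (τ : ℝ → X → ℝ) (u : ℝ → X) (t : ℝ) : X :=
  f t (u t) (u (t - τ t (u t))) - A (u t)

structure IsDelaySolution (A : X →L[ℝ] X) (f : ℝ → X → X → X) (τ : ℝ → X → ℝ) (φ : ℝ → X)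
    (T : ℝ) (u : ℝ → X) : Prop where
  eq_history : ∀ t ≤ 0, u t = φ t
  continuousOn : ContinuousOn u (Iic T)
  continuousOn_delayRHS : ContinuousOn (delayRHS A f τ u) (Icc 0 T)
  hasDerivWithinAt : ∀ t ∈ Icc 0 T, HasDerivWithinAt u (delayRHS A f τ u t) (Icc 0 T) t

variable {A : X →L[ℝ] X} {f : ℝ → X → X → X} {τ : ℝ → X → ℝ} {φ : ℝ → X} {Lf Lτ : ℝ}

theorem continuous_delayRHS (hf : Continuous fun p : ℝ × X × X => f p.1 p.2.1 p.2.2)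
    (hτ : Continuous fun p : ℝ × X => τ p.1 p.2) {u : ℝ → X} (hu : Continuous u) :
    Continuous (delayRHS A f τ u) := by
  have h_delay : Continuous fun t => t - τ t (u t) :=
    continuous_id.sub (hτ.comp (continuous_id.prodMk hu))
  exact (hf.comp (continuous_id.prodMk (hu.prodMk (hu.comp h_delay)))).sub (A.continuous.comp hu)

theorem exists_norm_delayRHS_le
    (hf : ∀ (t₁ t₂ : ℝ) (v₁ v₂ w₁ w₂ : X),
      ‖f t₁ v₁ w₁ - f t₂ v₂ w₂‖ ≤ Lf * (|t₁ - t₂| + ‖v₁ - v₂‖ + ‖w₁ - w₂‖))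
    (hτ_nonneg : ∀ t v, 0 ≤ τ t v)
    (hτ : ∀ (t₁ t₂ : ℝ) (v₁ v₂ : X), |τ t₁ v₁ - τ t₂ v₂| ≤ Lτ * (|t₁ - t₂| + ‖v₁ - v₂‖))
    (hLf : 0 ≤ Lf) (hLτ : 0 ≤ Lτ) {K : ℝ≥0} (hφ : LipschitzOnWith K φ (Iic 0)) :
    ∃ B : ℝ≥0, ∀ u : ℝ → X, (∀ r ≤ 0, u r = φ r) → ∀ s ∈ Icc (0 : ℝ) 1,
      (∀ r ∈ Icc 0 s, ‖u r - φ 0‖ ≤ 1) → ‖delayRHS A f τ u s‖ ≤ B := by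
  set τmax := τ 0 (φ 0) + 2 * Lτ
  refine ⟨(‖f 0 (φ 0) (φ 0)‖ + Lf * (2 + (1 + K * τmax)) + ‖A‖ * (‖φ 0‖ + 1)).toNNReal,
    fun u hu s hs hball => ?_⟩
  have hus : ‖u s - φ 0‖ ≤ 1 := hball s ⟨hs.1, le_rfl⟩
  have hτs : τ s (u s) ≤ τmax := by
    have h := (le_abs_self _).trans (hτ s 0 (u s) (φ 0))
    rw [sub_zero, abs_of_nonneg hs.1] at h
    nlinarith [hs.2]
  have h_delay : ‖u (s - τ s (u s)) - φ 0‖ ≤ 1 + K * τmax := by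
    rcases le_or_gt (s - τ s (u s)) 0 with h | h
    · rw [hu _ h, ← dist_eq_norm]
      have h_dist : dist (s - τ s (u s)) 0 ≤ τmax := by
        rw [Real.dist_eq, sub_zero, abs_of_nonpos h]
        linarith [hs.1]
      calc dist (φ (s - τ s (u s))) (φ 0) ≤ K * dist (s - τ s (u s)) 0 :=
            hφ.dist_le_mul _ h 0 (mem_Iic.2 le_rfl)
        _ ≤ K * τmax := by gcongr
        _ ≤ 1 + K * τmax := le_add_of_nonneg_left zero_le_one
    · have h_ball := hball _ ⟨h.le, sub_le_self _ (hτ_nonneg _ _)⟩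
      have h_nonneg : 0 ≤ (K : ℝ) * τmax := mul_nonneg K.2 ((hτ_nonneg _ _).trans hτs)
      linarith
  calc ‖delayRHS A f τ u s‖ ≤ ‖f s (u s) (u (s - τ s (u s)))‖ + ‖A (u s)‖ := norm_sub_le _ _
    _ ≤ (‖f 0 (φ 0) (φ 0)‖ + Lf * (|s - 0| + ‖u s - φ 0‖ + ‖u (s - τ s (u s)) - φ 0‖))
        + ‖A‖ * (‖φ 0‖ + ‖u s - φ 0‖) := by
      gcongr
      · exact (norm_le_insert' _ _).trans (by gcongr; exact hf ..)
      · exact A.le_opNorm _ |>.trans (by gcongr; exact norm_le_insert' _ _)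
    _ ≤ ‖f 0 (φ 0) (φ 0)‖ + Lf * (2 + (1 + K * τmax)) + ‖A‖ * (‖φ 0‖ + 1) := by
      rw [sub_zero, abs_of_nonneg hs.1]
      gcongr
      linarith [hs.2]
    _ ≤ _ := Real.le_coe_toNNReal _

theorem norm_delayRHS_sub_le
    (hf : ∀ (t₁ t₂ : ℝ) (v₁ v₂ w₁ w₂ : X),
      ‖f t₁ v₁ w₁ - f t₂ v₂ w₂‖ ≤ Lf * (|t₁ - t₂| + ‖v₁ - v₂‖ + ‖w₁ - w₂‖))
    (hτ_nonneg : ∀ t v, 0 ≤ τ t v)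
    (hτ : ∀ (t₁ t₂ : ℝ) (v₁ v₂ : X), |τ t₁ v₁ - τ t₂ v₂| ≤ Lτ * (|t₁ - t₂| + ‖v₁ - v₂‖))
    (hLf : 0 ≤ Lf) (hLτ : 0 ≤ Lτ) {u v : ℝ → X} {M : ℝ≥0} (hu : LipschitzWith M u) {s d : ℝ}
    (hd : ∀ r ≤ s, ‖u r - v r‖ ≤ d) :
    ‖delayRHS A f τ u s - delayRHS A f τ v s‖ ≤ (‖A‖ + Lf * (2 + M * Lτ)) * d := by
  set a := s - τ s (u s)
  set b := s - τ s (v s)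
  have hs := hd s le_rfl
  have hab : |a - b| ≤ Lτ * d := by
    calc |a - b| = |τ s (v s) - τ s (u s)| := by congr 1; ring
      _ ≤ Lτ * (|s - s| + ‖v s - u s‖) := hτ _ _ _ _
      _ ≤ Lτ * d := by rw [sub_self, abs_zero, zero_add, norm_sub_rev]; gcongr
  -- the delayed arguments differ, and only `u` is known to be Lipschitz
  have h_delay : ‖u a - v b‖ ≤ M * Lτ * d + d := by
    calc ‖u a - v b‖ ≤ ‖u a - u b‖ + ‖u b - v b‖ := norm_sub_le_norm_sub_add_norm_sub _ _ _
      _ ≤ M * |a - b| + d := by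
        gcongr
        · simpa [dist_eq_norm, Real.dist_eq] using hu.dist_le_mul a b
        · exact hd b (sub_le_self _ (hτ_nonneg _ _))
      _ ≤ M * Lτ * d + d := by rw [mul_assoc]; gcongr
  calc ‖delayRHS A f τ u s - delayRHS A f τ v s‖
      = ‖(f s (u s) (u a) - f s (v s) (v b)) - A (u s - v s)‖ := by
        rw [delayRHS, delayRHS, map_sub]; congr 1; abel
    _ ≤ Lf * (|s - s| + ‖u s - v s‖ + ‖u a - v b‖) + ‖A‖ * ‖u s - v s‖ :=
      (norm_sub_le _ _).trans (add_le_add (hf _ _ _ _ _ _) (A.le_opNorm _))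
    _ ≤ Lf * (0 + d + (M * Lτ * d + d)) + ‖A‖ * d := by
      rw [sub_self, abs_zero]; gcongr
    _ = (‖A‖ + Lf * (2 + M * Lτ)) * d := by ring

variable [CompleteSpace X]

section integral

variable {T : ℝ} {u v : ℝ → X}

theorem isDelaySolution_of_eq_add_integral (hu : Continuous u)
    (hg : Continuous (delayRHS A f τ u)) (h_hist : ∀ t ≤ 0, u t = φ t)
    (h_int : ∀ t ∈ Icc 0 T, u t = φ 0 + ∫ s in 0..t, delayRHS A f τ u s) :
    IsDelaySolution A f τ φ T u where
  eq_history := h_hist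
  continuousOn := hu.continuousOn
  continuousOn_delayRHS := hg.continuousOn
  hasDerivWithinAt t ht :=
    ((hg.integral_hasStrictDerivAt 0 t).hasDerivAt.const_add (φ 0)).hasDerivWithinAt.congr
      h_int (h_int t ht)

theorem IsDelaySolution.eq_add_integral (hu : IsDelaySolution A f τ φ T u) {t : ℝ}
    (ht : t ∈ Icc 0 T) : u t = φ 0 + ∫ s in 0..t, delayRHS A f τ u s := by
  have hsub : Icc 0 t ⊆ Icc 0 T := Icc_subset_Icc_right ht.2
  rw [intervalIntegral.integral_eq_sub_of_hasDerivAt_of_le ht.1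
    (hu.continuousOn.mono (hsub.trans Icc_subset_Iic_self))
    (fun s hs => (hu.hasDerivWithinAt s (Ioo_subset_Icc_self.trans hsub hs)).hasDerivAt
      (Icc_mem_nhds hs.1 (hs.2.trans_le ht.2)))
    ((hu.continuousOn_delayRHS.mono hsub).intervalIntegrable_of_Icc ht.1),
    hu.eq_history 0 le_rfl]
  abel

theorem IsDelaySolution.eq_of_lipschitzWith
    (hf : ∀ (t₁ t₂ : ℝ) (v₁ v₂ w₁ w₂ : X),
      ‖f t₁ v₁ w₁ - f t₂ v₂ w₂‖ ≤ Lf * (|t₁ - t₂| + ‖v₁ - v₂‖ + ‖w₁ - w₂‖))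
    (hτ_nonneg : ∀ t v, 0 ≤ τ t v)
    (hτ : ∀ (t₁ t₂ : ℝ) (v₁ v₂ : X), |τ t₁ v₁ - τ t₂ v₂| ≤ Lτ * (|t₁ - t₂| + ‖v₁ - v₂‖))
    (hLf : 0 ≤ Lf) (hLτ : 0 ≤ Lτ) (hu : IsDelaySolution A f τ φ T u)
    (hv : IsDelaySolution A f τ φ T v) {M : ℝ≥0} (huM : LipschitzWith M u)
    (hT : (‖A‖ + Lf * (2 + M * Lτ)) * T < 1) {t : ℝ} (ht : t ≤ T) : v t = u t := by
  rcases le_or_gt t 0 with ht₀ | ht₀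
  · rw [hu.eq_history t ht₀, hv.eq_history t ht₀]
  set C := ‖A‖ + Lf * (2 + M * Lτ)
  obtain ⟨t₀, ht₀T, hmax⟩ := isCompact_Icc.exists_isMaxOn (nonempty_Icc.2 (ht₀.le.trans ht))
    ((hu.continuousOn.mono Icc_subset_Iic_self).sub
      (hv.continuousOn.mono Icc_subset_Iic_self)).norm
  set d := ‖u t₀ - v t₀‖
  have hd : ∀ r ≤ T, ‖u r - v r‖ ≤ d := fun r hr => by
    rcases le_or_gt r 0 with h | h
    · rw [hu.eq_history r h, hv.eq_history r h, sub_self, norm_zero]; exact norm_nonneg _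
    · exact hmax ⟨h.le, hr⟩
  have hdT : d ≤ C * d * T := by
    calc d = ‖(∫ s in 0..t₀, delayRHS A f τ u s) - ∫ s in 0..t₀, delayRHS A f τ v s‖ := by
          rw [← add_sub_add_left_eq_sub _ _ (φ 0), ← hu.eq_add_integral ht₀T,
            ← hv.eq_add_integral ht₀T]
      _ ≤ C * d * (t₀ - 0) := by
        refine norm_integral_sub_integral_le ht₀T.1
          (hu.continuousOn_delayRHS.mono (Icc_subset_Icc_right ht₀T.2))
          (hv.continuousOn_delayRHS.mono (Icc_subset_Icc_right ht₀T.2)) fun s hs => ?_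
        exact norm_delayRHS_sub_le hf hτ_nonneg hτ hLf hLτ huM fun r hr =>
          hd r (hr.trans (hs.2.trans ht₀T.2))
      _ ≤ C * d * T := by
        have hC : 0 ≤ C := by positivity
        rw [sub_zero]; gcongr; exact ht₀T.2
  have hd₀ : d = 0 := by nlinarith [norm_nonneg (u t₀ - v t₀)]
  exact (sub_eq_zero.1 (norm_le_zero_iff.1 (hd₀ ▸ hd t ht))).symm

end integral

theorem exists_lipschitzWith_isDelaySolution_of_le
    (hf : ∀ (t₁ t₂ : ℝ) (v₁ v₂ w₁ w₂ : X),
      ‖f t₁ v₁ w₁ - f t₂ v₂ w₂‖ ≤ Lf * (|t₁ - t₂| + ‖v₁ - v₂‖ + ‖w₁ - w₂‖))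
    (hτ_nonneg : ∀ t v, 0 ≤ τ t v)
    (hτ : ∀ (t₁ t₂ : ℝ) (v₁ v₂ : X), |τ t₁ v₁ - τ t₂ v₂| ≤ Lτ * (|t₁ - t₂| + ‖v₁ - v₂‖))
    (hLf : 0 ≤ Lf) (hLτ : 0 ≤ Lτ) {K : ℝ≥0} (hφ : LipschitzOnWith K φ (Iic 0)) {B : ℝ≥0}
    (hB : ∀ u : ℝ → X, (∀ r ≤ 0, u r = φ r) → ∀ s ∈ Icc (0 : ℝ) 1,
      (∀ r ∈ Icc 0 s, ‖u r - φ 0‖ ≤ 1) → ‖delayRHS A f τ u s‖ ≤ B)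
    {T : ℝ} (hT : 0 ≤ T) (hT₁ : T ≤ 1) (hBT : B * T ≤ 1)
    (hCT : (‖A‖ + Lf * (2 + (K + B) * Lτ)) * T < 1) :
    ∃ u, IsDelaySolution A f τ φ T u ∧ LipschitzWith (K + B) u := by
  set C := ‖A‖ + Lf * (2 + (K + B) * Lτ)
  have hg (w : C(Icc 0 T, X)) : Continuous (delayRHS A f τ (extendHistory hT φ w)) :=
    continuous_delayRHS (continuous_uncurry₃_of_norm_sub_le hf)
      (continuous_uncurry_of_abs_sub_le hτ) (continuous_extendHistory hT hφ.continuousOn w)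
  let picard (w : C(Icc 0 T, X)) : C(Icc 0 T, X) :=
    ⟨fun t => ∫ s in 0..t, delayRHS A f τ (extendHistory hT φ w) s,
      (intervalIntegral.continuous_primitive (fun _ _ => (hg w).intervalIntegrable _ _) 0).comp
        continuous_subtype_val⟩
  let S : Set C(Icc 0 T, X) := {w | w ⟨0, left_mem_Icc.2 hT⟩ = 0 ∧ LipschitzWith B w}
  have hS : IsClosed S := (isClosed_eq (continuous_eval_const _) continuous_const).inter
    ((isClosed_setOfPred_lipschitzWith B).preimage continuous_coeFun)
  have h_maps : MapsTo picard S S := by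
    rintro w ⟨hw₀, hw⟩
    refine ⟨intervalIntegral.integral_same, lipschitzWith_integral_of_norm_le (hg w) fun s hs => ?_⟩
    exact hB _ (fun r => extendHistory_of_nonpos hT hw₀) s ⟨hs.1, hs.2.trans hT₁⟩ fun r hr =>
      (norm_extendHistory_sub_le_mul hT hw₀ hw ⟨hr.1, hr.2.trans hs.2⟩).trans hBT
  have h_contr : ContractingWith (C * T).toNNReal (h_maps.restrict picard S S) := by
    refine ⟨Real.toNNReal_lt_one.2 hCT, LipschitzWith.of_dist_le' fun w₁ w₂ => ?_⟩
    rw [Subtype.dist_eq, Subtype.dist_eq, ContinuousMap.dist_le (by positivity)]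
    intro t
    rw [dist_eq_norm]
    calc ‖picard w₁ t - picard w₂ t‖ ≤ C * dist (w₁ : C(Icc 0 T, X)) w₂ * (t - 0) :=
          norm_integral_sub_integral_le t.2.1 (hg _).continuousOn (hg _).continuousOn
            fun s _ => norm_delayRHS_sub_le hf hτ_nonneg hτ hLf hLτ
              (lipschitzWith_extendHistory hT hφ w₁.2.2) fun r _ =>
                norm_extendHistory_sub_le hT _ _ r
      _ ≤ C * T * dist w₁ w₂ := by
        rw [sub_zero, mul_right_comm, Subtype.dist_eq]; gcongr; exact t.2.2
  obtain ⟨w, ⟨hw₀, hw⟩, hw_fixed, -⟩ :=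
    h_contr.exists_fixedPoint' hS.isComplete h_maps (x := 0) ⟨rfl, LipschitzWith.const' 0⟩
      (edist_ne_top _ _)
  have hu := lipschitzWith_extendHistory hT hφ hw
  refine ⟨_, isDelaySolution_of_eq_add_integral hu.continuous (hg w)
    (fun t => extendHistory_of_nonpos hT hw₀) fun t ht => ?_, hu⟩
  rw [extendHistory_of_mem_Icc hT w ht, ← DFunLike.congr_fun hw_fixed ⟨t, ht⟩]
  rfl

theorem exists_lipschitzWith_isDelaySolution
    (hf : ∀ (t₁ t₂ : ℝ) (v₁ v₂ w₁ w₂ : X),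
      ‖f t₁ v₁ w₁ - f t₂ v₂ w₂‖ ≤ Lf * (|t₁ - t₂| + ‖v₁ - v₂‖ + ‖w₁ - w₂‖))
    (hτ_nonneg : ∀ t v, 0 ≤ τ t v)
    (hτ : ∀ (t₁ t₂ : ℝ) (v₁ v₂ : X), |τ t₁ v₁ - τ t₂ v₂| ≤ Lτ * (|t₁ - t₂| + ‖v₁ - v₂‖))
    (hLf : 0 ≤ Lf) (hLτ : 0 ≤ Lτ) {K : ℝ≥0} (hφ : LipschitzOnWith K φ (Iic 0)) :
    ∃ M : ℝ≥0, ∃ T > 0, (‖A‖ + Lf * (2 + M * Lτ)) * T < 1 ∧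
      ∃ u, IsDelaySolution A f τ φ T u ∧ LipschitzWith M u := by
  obtain ⟨B, hB⟩ := exists_norm_delayRHS_le (A := A) hf hτ_nonneg hτ hLf hLτ hφ
  have h_small (c : ℝ) : ∀ᶠ T in 𝓝[>] 0, c * T < 1 :=
    nhdsWithin_le_nhds <| ((continuous_const_mul c).tendsto' 0 0 (mul_zero c)).eventually_lt_const
      one_pos
  obtain ⟨T, hT, hT₁, hBT, hCT⟩ := (eventually_mem_nhdsWithin.and <| (h_small 1).and <|
    (h_small B).and (h_small (‖A‖ + Lf * (2 + (K + B) * Lτ)))).exists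
  obtain ⟨u, hu, huM⟩ := exists_lipschitzWith_isDelaySolution_of_le hf hτ_nonneg hτ hLf hLτ hφ hB
    hT.le (by simpa using hT₁.le) hBT.le hCT
  exact ⟨K + B, T, hT, hCT, u, hu, huM⟩

end

/-- Local well-posedness of the initial value problem
`u′(t) + A u(t) = f(t, u(t), u(t − τ(t, u(t))))`, `u = φ` on `(−∞, 0]`, for a
bounded operator `A`, Lipschitz continuous `f` and `τ ≥ 0`, and Lipschitz
continuous history `φ`: there exist `T > 0` and a unique solution `u` which
coincides with `φ` on `(−∞, 0]`, is continuous on `(−∞, T]` and continuously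
differentiable on `[0, T]`, and satisfies the equation on `[0, T]`. -/
theorem delay_problem_wellposed
    (X : Type*) [NormedAddCommGroup X] [NormedSpace ℝ X] [CompleteSpace X]
    (A : X →L[ℝ] X) (Lf Lτ Lφ : ℝ)
    (f : ℝ → X → X → X) (τ : ℝ → X → ℝ) (φ : ℝ → X)
    (hf : ∀ (t₁ t₂ : ℝ) (v₁ v₂ w₁ w₂ : X),
      ‖f t₁ v₁ w₁ - f t₂ v₂ w₂‖ ≤ Lf * (|t₁ - t₂| + ‖v₁ - v₂‖ + ‖w₁ - w₂‖))
    (hτ_nonneg : ∀ (t : ℝ) (v : X), 0 ≤ τ t v)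
    (hτ : ∀ (t₁ t₂ : ℝ) (v₁ v₂ : X),
      |τ t₁ v₁ - τ t₂ v₂| ≤ Lτ * (|t₁ - t₂| + ‖v₁ - v₂‖))
    (hφ : ∀ a b : ℝ, a ≤ 0 → b ≤ 0 → ‖φ a - φ b‖ ≤ Lφ * |a - b|) :
    ∃ T > (0:ℝ), ∃ u : ℝ → X,
      ((∀ t : ℝ, t ≤ 0 → u t = φ t) ∧
        ContinuousOn u (Set.Iic T) ∧
        ContinuousOn (fun t : ℝ =>
          f t (u t) (u (t - τ t (u t))) - A (u t)) (Set.Icc 0 T) ∧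
        ∀ t ∈ Set.Icc (0:ℝ) T,
          HasDerivWithinAt u
            (f t (u t) (u (t - τ t (u t))) - A (u t)) (Set.Icc (0:ℝ) T) t) ∧
      ∀ v : ℝ → X,
        ((∀ t : ℝ, t ≤ 0 → v t = φ t) ∧
          ContinuousOn v (Set.Iic T) ∧
          ContinuousOn (fun t : ℝ =>
            f t (v t) (v (t - τ t (v t))) - A (v t)) (Set.Icc 0 T) ∧
          ∀ t ∈ Set.Icc (0:ℝ) T,
            HasDerivWithinAt v
              (f t (v t) (v (t - τ t (v t))) - A (v t)) (Set.Icc (0:ℝ) T) t) →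
        ∀ t : ℝ, t ≤ T → v t = u t := by
  have hLf : 0 ≤ Lf := by simpa using (norm_nonneg _).trans (hf 1 0 0 0 0 0)
  have hLτ : 0 ≤ Lτ := by simpa using (abs_nonneg _).trans (hτ 1 0 0 0)
  have hφ' : LipschitzOnWith Lφ.toNNReal φ (Iic 0) :=
    LipschitzOnWith.of_dist_le' fun a ha b hb => by
      simpa [dist_eq_norm, Real.dist_eq] using hφ a b ha hb
  obtain ⟨M, T, hT, hCT, u, hu, huM⟩ :=
    exists_lipschitzWith_isDelaySolution (A := A) hf hτ_nonneg hτ hLf hLτ hφ'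
  refine ⟨T, hT, u, ⟨hu.1, hu.2, hu.3, hu.4⟩, fun v ⟨hv₁, hv₂, hv₃, hv₄⟩ t ht => ?_⟩
  exact hu.eq_of_lipschitzWith hf hτ_nonneg hτ hLf hLτ ⟨hv₁, hv₂, hv₃, hv₄⟩ huM hCT ht
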